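/- A real linear operator G : ℝ² → ℝ², identified with a 2×2 real matrix, maps Z[ω] (viewed as a subset of ℝ² ≅ ℂ) into itself if and only if G has the form G = [[a + a'/√2, b + b'/√2], [c + c'/√2, d + d'/√2]] where a, b, c, d, a', b', c', d' are integers satisfying a + b + c + d ≡ 0 (mod 2) and a' ≡ b' ≡ c' ≡ d' (mod 2). -/

import Mathlib

open Matrix

/-- Z[ω] viewed as a subset of ℝ²: vectors (x₁ + x₂/√2, y₁ + y₂/√2) with
    integer x₁, x₂, y₁, y₂ and x₂ ≡ y₂ (mod 2). -/
noncomputable def Zomega2 : Set (Fin 2 → ℝ) :=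
  {u | ∃ x₁ x₂ y₁ y₂ : ℤ,
    u 0 = (x₁ : ℝ) + (x₂ : ℝ) / Real.sqrt 2 ∧
    u 1 = (y₁ : ℝ) + (y₂ : ℝ) / Real.sqrt 2 ∧ x₂ % 2 = y₂ % 2}

/-!
Every coordinate is written as `m + n/√2`, and by irrationality of `√2` the pair `(m, n)` is
unique. The images of `e₁`, `e₂` are the columns of `G`, giving the shape of the entries together
with `a' ≡ c'` and `b' ≡ d'`; the image of `ω = (1/√2, 1/√2)` has coordinates
`(a' + b')/2 + (a + b)/√2` and `(c' + d')/2 + (c + d)/√2`, which forces `a' ≡ b'` and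
`a + b ≡ c + d (mod 2)`. Conversely
`(a + a'/√2)(x + x'/√2) = a x + a' x'/2 + (a x' + a' x)/√2`, and the parity conditions make the
rational parts of `G u` integers and its two irrational parts congruent mod 2.
-/

open Real

noncomputable def zSqrtHalf (m n : ℤ) : ℝ := m + n / √2

lemma mem_Zomega2 {u : Fin 2 → ℝ} :
    u ∈ Zomega2 ↔
      ∃ x x' y y' : ℤ, u 0 = zSqrtHalf x x' ∧ u 1 = zSqrtHalf y y' ∧ x' ≡ y' [ZMOD 2] :=
  Iff.rfl

lemma zSqrtHalf_injective {m n m' n' : ℤ} (h : zSqrtHalf m n = zSqrtHalf m' n') :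
    m = m' ∧ n = n' := by
  have key : ((m - m' : ℤ) : ℝ) * √2 = ((n' - n : ℤ) : ℝ) := by
    unfold zSqrtHalf at h
    field_simp at h
    push_cast
    linear_combination h
  have hm : m - m' = 0 := by
    by_contra hm
    exact (irrational_sqrt_two.intCast_mul hm).ne_int _ key
  rw [hm, Int.cast_zero, zero_mul, eq_comm, Int.cast_eq_zero] at key
  constructor <;> omega

lemma two_mul_zSqrtHalf (m n : ℤ) : 2 * zSqrtHalf m n = zSqrtHalf (2 * m) (2 * n) := by
  unfold zSqrtHalf
  push_cast
  ring

lemma two_mul_zSqrtHalf_mul_add_mul (a a' b b' x x' y y' : ℤ) :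
    2 * (zSqrtHalf a a' * zSqrtHalf x x' + zSqrtHalf b b' * zSqrtHalf y y') =
      zSqrtHalf (2 * (a * x + b * y) + a' * x' + b' * y')
        (2 * (a * x' + a' * x + b * y' + b' * y)) := by
  have h2 : √2 * √2 = 2 := mul_self_sqrt zero_le_two
  unfold zSqrtHalf
  field_simp
  push_cast
  linear_combination (-(a' * x' + b' * y' : ℝ)) * h2

lemma zSqrtHalf_mul_add_mul {a a' b b' x x' y y' : ℤ} (hab : a' ≡ b' [ZMOD 2])
    (hxy : x' ≡ y' [ZMOD 2]) :
    zSqrtHalf a a' * zSqrtHalf x x' + zSqrtHalf b b' * zSqrtHalf y y' =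
      zSqrtHalf (a * x + b * y + (a' * x' + b' * y') / 2) (a * x' + a' * x + b * y' + b' * y) := by
  have heven : 2 ∣ a' * x' + a' * x' - (a' * x' + b' * y') :=
    ((hab.symm.mul hxy.symm).add_left (a' * x')).dvd
  apply mul_left_cancel₀ (two_ne_zero' ℝ)
  rw [two_mul_zSqrtHalf_mul_add_mul, two_mul_zSqrtHalf]
  congr 1
  omega

lemma irrational_parts_modEq_of_parity {a a' b b' c c' d d' x x' y y' : ℤ}
    (hac : a' ≡ c' [ZMOD 2]) (hbd : b' ≡ d' [ZMOD 2]) (habcd : a + b + c + d ≡ 0 [ZMOD 2])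
    (hxy : x' ≡ y' [ZMOD 2]) :
    a * x' + a' * x + b * y' + b' * y ≡ c * x' + c' * x + d * y' + d' * y [ZMOD 2] := by
  have hac := (ZMod.intCast_eq_intCast_iff _ _ 2).2 hac
  have hbd := (ZMod.intCast_eq_intCast_iff _ _ 2).2 hbd
  have habcd := (ZMod.intCast_eq_intCast_iff _ _ 2).2 habcd
  have hxy := (ZMod.intCast_eq_intCast_iff _ _ 2).2 hxy
  apply (ZMod.intCast_eq_intCast_iff _ _ 2).1
  push_cast at *
  have h2 : (2 : ZMod 2) = 0 := rfl
  linear_combination x * hac + y * hbd + y' * habcd + (a - c) * hxy - (c + d) * y' * h2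

lemma mulVec_apply_fin_two (G : Matrix (Fin 2) (Fin 2) ℝ) (u : Fin 2 → ℝ) (i : Fin 2) :
    (G *ᵥ u) i = G i 0 * u 0 + G i 1 * u 1 :=
  vec2_dotProduct _ _

lemma single_mem_Zomega2 (j : Fin 2) : Pi.single j 1 ∈ Zomega2 := by
  fin_cases j
  exacts [⟨1, 0, 0, 0, by simp, by simp, rfl⟩, ⟨0, 0, 1, 0, by simp, by simp, rfl⟩]

lemma exists_zSqrtHalf_col {G : Matrix (Fin 2) (Fin 2) ℝ}
    (h : ∀ u ∈ Zomega2, G *ᵥ u ∈ Zomega2) (j : Fin 2) :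
    ∃ a a' c c' : ℤ, G 0 j = zSqrtHalf a a' ∧ G 1 j = zSqrtHalf c c' ∧ a' ≡ c' [ZMOD 2] :=
  mem_Zomega2.1 (mulVec_single_one G j ▸ h _ (single_mem_Zomega2 j))

lemma add_eq_of_mul_sqrtHalf_add_eq {a a' b b' p p' : ℤ}
    (h : zSqrtHalf a a' * zSqrtHalf 0 1 + zSqrtHalf b b' * zSqrtHalf 0 1 = zSqrtHalf p p') :
    a' + b' = 2 * p ∧ a + b = p' := by
  have h2 := congrArg (2 * ·) h
  simp only [two_mul_zSqrtHalf_mul_add_mul, two_mul_zSqrtHalf] at h2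
  obtain ⟨h₁, h₂⟩ := zSqrtHalf_injective h2
  constructor <;> linarith

lemma mulVec_mem_Zomega2 {G : Matrix (Fin 2) (Fin 2) ℝ} {a b c d a' b' c' d' : ℤ}
    (ha : G 0 0 = zSqrtHalf a a') (hb : G 0 1 = zSqrtHalf b b')
    (hc : G 1 0 = zSqrtHalf c c') (hd : G 1 1 = zSqrtHalf d d')
    (habcd : a + b + c + d ≡ 0 [ZMOD 2]) (hab : a' ≡ b' [ZMOD 2]) (hac : a' ≡ c' [ZMOD 2])
    (hbd : b' ≡ d' [ZMOD 2]) {u : Fin 2 → ℝ} (hu : u ∈ Zomega2) : G *ᵥ u ∈ Zomega2 := by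
  obtain ⟨x, x', y, y', hx, hy, hxy⟩ := mem_Zomega2.1 hu
  have h0 := zSqrtHalf_mul_add_mul (a := a) (b := b) (x := x) (y := y) hab hxy
  have h1 := zSqrtHalf_mul_add_mul (a := c) (b := d) (x := x) (y := y)
    (hac.symm.trans (hab.trans hbd)) hxy
  rw [← ha, ← hb, ← hx, ← hy, ← mulVec_apply_fin_two] at h0
  rw [← hc, ← hd, ← hx, ← hy, ← mulVec_apply_fin_two] at h1
  exact mem_Zomega2.2 ⟨_, _, _, _, h0, h1, irrational_parts_modEq_of_parity hac hbd habcd hxy⟩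

/-- Characterization of grid operators: a real 2×2 matrix maps Z[ω] ⊆ ℝ² into
    itself iff its entries have the form a + a'/√2 with the stated parity
    conditions. -/
theorem stmt10 (G : Matrix (Fin 2) (Fin 2) ℝ) :
    (∀ u ∈ Zomega2, G *ᵥ u ∈ Zomega2) ↔
    ∃ a b c d a' b' c' d' : ℤ,
      G 0 0 = (a : ℝ) + (a' : ℝ) / Real.sqrt 2 ∧
      G 0 1 = (b : ℝ) + (b' : ℝ) / Real.sqrt 2 ∧
      G 1 0 = (c : ℝ) + (c' : ℝ) / Real.sqrt 2 ∧
      G 1 1 = (d : ℝ) + (d' : ℝ) / Real.sqrt 2 ∧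
      (a + b + c + d) % 2 = 0 ∧
      a' % 2 = b' % 2 ∧ b' % 2 = c' % 2 ∧ c' % 2 = d' % 2 := by
  constructor
  · intro h
    obtain ⟨a, a', c, c', ha, hc, hac⟩ := exists_zSqrtHalf_col h 0
    obtain ⟨b, b', d, d', hb, hd, hbd⟩ := exists_zSqrtHalf_col h 1
    obtain ⟨p, p', q, q', hp, hq, hpq⟩ :=
      mem_Zomega2.1 (h ![zSqrtHalf 0 1, zSqrtHalf 0 1] ⟨0, 1, 0, 1, rfl, rfl, rfl⟩)
    rw [mulVec_apply_fin_two, ha, hb] at hp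
    rw [mulVec_apply_fin_two, hc, hd] at hq
    obtain ⟨hab', hab⟩ := add_eq_of_mul_sqrtHalf_add_eq hp
    obtain ⟨hcd', hcd⟩ := add_eq_of_mul_sqrtHalf_add_eq hq
    unfold Int.ModEq at hac hbd hpq
    exact ⟨a, b, c, d, a', b', c', d', ha, hb, hc, hd, by omega, by omega, by omega, by omega⟩
  · rintro ⟨a, b, c, d, a', b', c', d', ha, hb, hc, hd, habcd, hab, hbc, hcd⟩ u hu
    exact mulVec_mem_Zomega2 ha hb hc hd habcd hab (hab.trans hbc) (hbc.trans hcd) hu
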